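/- Helpful Lemma: Let G be a finite bipartite graph with parts U and W such that every vertex of U has degree at least 1. Then there is a function σ : U → E(G) with σ(u) incident to u for each u ∈ U, and a collection 𝒯 of pairwise edge-disjoint open trails in G, with at most one trail of 𝒯 ending at each vertex, such that the edge sets of trails in 𝒯 together with σ(U) partition E(G). -/

import Mathlib

open SimpleGraph
open scoped Classical

section helpers

set_option linter.unusedSectionVars false
set_option linter.deprecated false

variable {V : Type*} [Fintype V] [DecidableEq V]

/-- Edge-based degree: number of edges incident to `v`. -/
noncomputable def edeg (H : SimpleGraph V) (v : V) : ℕ :=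
  (H.edgeFinset.filter (fun e => v ∈ e)).card

lemma edeg_pos_iff (H : SimpleGraph V) (v : V) : 0 < edeg H v ↔ ∃ z, H.Adj v z := by
  rw [edeg, Finset.card_pos]
  constructor
  · rintro ⟨e, he⟩
    simp only [Finset.mem_filter, mem_edgeFinset] at he
    obtain ⟨y, rfl⟩ := Sym2.mem_iff_exists.mp he.2
    exact ⟨y, (mem_edgeSet H).mp he.1⟩
  · rintro ⟨z, hz⟩
    exact ⟨s(v, z), by simp [mem_edgeFinset, hz]⟩

lemma edeg_split (H : SimpleGraph V) (L : List (Sym2 V)) (hnd : L.Nodup)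
    (hsub : ∀ e ∈ L, e ∈ H.edgeSet) (z : V) :
    edeg H z = edeg (H.deleteEdges {e | e ∈ L}) z + L.countP (fun e => z ∈ e) := by
  classical
  have hEF : ∀ (inst : Fintype (H.deleteEdges {e | e ∈ L}).edgeSet),
      (H.deleteEdges {e | e ∈ L}).edgeFinset = H.edgeFinset \ L.toFinset := by
    intro _
    ext e
    simp [mem_edgeFinset, edgeSet_deleteEdges]
  have hLsub : L.toFinset ⊆ H.edgeFinset := by
    intro e he
    rw [List.mem_toFinset] at he
    rw [mem_edgeFinset]
    exact hsub e he
  have hcount : L.countP (fun e => z ∈ e) = (L.toFinset.filter (fun e => z ∈ e)).card := by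
    have hfin : (L.filter (fun e => z ∈ e)).toFinset = L.toFinset.filter (fun e => z ∈ e) := by
      ext e; simp [List.mem_filter]
    rw [List.countP_eq_length_filter, ← hfin, List.toFinset_card_of_nodup (hnd.filter _)]
  rw [hcount, edeg, edeg, hEF _]
  rw [← Finset.card_union_of_disjoint]
  · congr 1
    rw [← Finset.filter_union, Finset.sdiff_union_of_subset hLsub]
  · exact Finset.disjoint_filter_filter Finset.sdiff_disjoint

lemma edeg_eq_countP {H : SimpleGraph V} {x y : V} {w : H.Walk x y} (hw : w.IsTrail)
    (z : V) (hall : ∀ t, H.Adj z t → s(z, t) ∈ w.edges) :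
    edeg H z = w.edges.countP (fun e => z ∈ e) := by
  classical
  have h1 : H.edgeFinset.filter (fun e => z ∈ e) = w.edges.toFinset.filter (fun e => z ∈ e) := by
    ext e
    simp only [Finset.mem_filter, mem_edgeFinset, List.mem_toFinset]
    constructor
    · rintro ⟨he, hz⟩
      obtain ⟨t, rfl⟩ := Sym2.mem_iff_exists.mp hz
      exact ⟨hall t ((mem_edgeSet H).mp he), hz⟩
    · rintro ⟨he, hz⟩
      exact ⟨w.edges_subset_edgeSet he, hz⟩
  have hfin : (w.edges.filter (fun e => z ∈ e)).toFinset
      = w.edges.toFinset.filter (fun e => z ∈ e) := by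
    ext e; simp [List.mem_filter]
  rw [edeg, h1, List.countP_eq_length_filter, ← hfin,
    List.toFinset_card_of_nodup (hw.edges_nodup.filter _)]


lemma trail_length_le {H : SimpleGraph V} {x y : V} (w : H.Walk x y) (hw : w.IsTrail) :
    w.length ≤ H.edgeFinset.card := by
  classical
  rw [← w.length_edges, ← List.toFinset_card_of_nodup hw.edges_nodup]
  apply Finset.card_le_card
  intro e he
  rw [List.mem_toFinset] at he
  rw [mem_edgeFinset]
  exact w.edges_subset_edgeSet he

lemma exists_max_trail (H : SimpleGraph V) (x : V) :
    ∃ (y : V) (w : H.Walk x y), w.IsTrail ∧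
      ∀ (z : V) (w' : H.Walk x z), w'.IsTrail → w'.length ≤ w.length := by
  classical
  set P : ℕ → Prop := fun n => ∃ (y : V) (w : H.Walk x y), w.IsTrail ∧ w.length = n with hP
  have h0 : P 0 := ⟨x, Walk.nil, Walk.IsTrail.nil, rfl⟩
  have hspec := Nat.findGreatest_spec (P := P) (Nat.zero_le H.edgeFinset.card) h0
  obtain ⟨y, w, hw, hlen⟩ := hspec
  refine ⟨y, w, hw, fun z w' hw' => ?_⟩
  rw [hlen]
  exact Nat.le_findGreatest (trail_length_le w' hw') ⟨z, w', hw', rfl⟩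

lemma max_trail_saturated {H : SimpleGraph V} {x y : V} {w : H.Walk x y} (hw : w.IsTrail)
    (hmax : ∀ (z : V) (w' : H.Walk x z), w'.IsTrail → w'.length ≤ w.length) :
    ∀ t, H.Adj y t → s(y, t) ∈ w.edges := by
  intro t hadj
  by_contra hne
  have htr : (w.concat hadj).IsTrail := by
    rw [Walk.isTrail_def, Walk.edges_concat, List.concat_eq_append]
    exact hw.edges_nodup.append (List.nodup_singleton _)
      (fun e he he' => hne (by rwa [List.mem_singleton.mp he'] at he))
  have := hmax t (w.concat hadj) htr
  rw [Walk.length_concat] at this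
  omega

/-- A maximal trail from a vertex of odd edge-degree ends elsewhere, at an odd vertex. -/
lemma max_trail_odd_end {H : SimpleGraph V} {x y : V} {w : H.Walk x y} (hw : w.IsTrail)
    (hmax : ∀ (z : V) (w' : H.Walk x z), w'.IsTrail → w'.length ≤ w.length)
    (hodd : Odd (edeg H x)) : x ≠ y ∧ Odd (edeg H y) := by
  have hsat := max_trail_saturated hw hmax
  have hcount : edeg H y = w.edges.countP (fun e => y ∈ e) := edeg_eq_countP hw y hsat
  by_cases hxy : x = y
  · exfalso
    subst hxy
    have heven : Even (w.edges.countP (fun e => x ∈ e)) :=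
      (hw.even_countP_edges_iff x).mpr (fun h => absurd rfl h)
    rw [← hcount] at heven
    exact (Nat.not_even_iff_odd.mpr hodd) heven
  · refine ⟨hxy, ?_⟩
    rw [hcount]
    rw [← Nat.not_even_iff_odd]
    intro heven
    have := (hw.even_countP_edges_iff y).mp heven hxy
    exact this.2 rfl

lemma exists_other_odd (H : SimpleGraph V) (v : V) (hodd : Odd (edeg H v)) :
    ∃ z, z ≠ v ∧ Odd (edeg H z) ∧ H.Reachable v z := by
  obtain ⟨y, w, hw, hmax⟩ := exists_max_trail H v
  obtain ⟨hne, hoddy⟩ := max_trail_odd_end hw hmax hodd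
  exact ⟨y, Ne.symm hne, hoddy, w.reachable⟩

set_option linter.unusedSectionVars false

lemma reach_prefix {H : SimpleGraph V} {a b : V} (T : H.Walk a b) {v t : V} (w : H.Walk v t) :
    ∃ p : V, (H.deleteEdges {e | e ∈ T.edges}).Reachable v p ∧ (p = t ∨ p ∈ T.support) := by
  induction w with
  | nil => exact ⟨_, Reachable.refl _, Or.inl rfl⟩
  | @cons u u' t h q ih =>
    by_cases hm : s(u, u') ∈ T.edges
    · exact ⟨u, Reachable.refl _, Or.inr (T.fst_mem_support_of_mem_edges hm)⟩
    · obtain ⟨p, hp, hor⟩ := ih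
      have hadj : (H.deleteEdges {e | e ∈ T.edges}).Adj u u' := by
        rw [deleteEdges_adj]
        exact ⟨h, hm⟩
      exact ⟨p, hadj.reachable.trans hp, hor⟩

lemma splice_trail {H : SimpleGraph V} {x y p : V} (T : H.Walk x y) (hT : T.IsTrail)
    (hp : p ∈ T.support) (c : H.Walk p p) (hc : c.IsTrail)
    (hdisj : ∀ e ∈ c.edges, e ∉ T.edges) :
    ∃ w : H.Walk x y, w.IsTrail ∧ w.length = T.length + c.length := by
  classical
  refine ⟨(T.takeUntil p hp).append (c.append (T.dropUntil p hp)), ?_, ?_⟩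
  · rw [Walk.isTrail_def, Walk.edges_append, Walk.edges_append]
    have hTnd : ((T.takeUntil p hp).edges ++ (T.dropUntil p hp).edges).Nodup := by
      rw [← Walk.edges_append, Walk.take_spec]
      exact hT.edges_nodup
    have hdisj' : ∀ e ∈ c.edges,
        e ∉ (T.takeUntil p hp).edges ++ (T.dropUntil p hp).edges := by
      intro e he
      rw [← Walk.edges_append, Walk.take_spec]
      exact hdisj e he
    rw [List.nodup_append] at hTnd ⊢
    refine ⟨hTnd.1, ?_, ?_⟩
    · rw [List.nodup_append]
      refine ⟨hc.edges_nodup, hTnd.2.1, ?_⟩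
      intro e he
      have := hdisj' e he
      rw [List.mem_append] at this
      push_neg at this
      exact fun b hb h => this.2 (h ▸ hb)
    · intro e he b he' heq; subst heq
      rw [List.mem_append] at he'
      rcases he' with he' | he'
      · exact (by
          have := hdisj' _ he'
          rw [List.mem_append] at this
          push_neg at this
          exact this.1 he)
      · exact hTnd.2.2 e he e he' rfl
  · rw [Walk.length_append, Walk.length_append]
    have : (T.takeUntil p hp).length + (T.dropUntil p hp).length = T.length := by
      rw [← Walk.length_append, Walk.take_spec]
    omega

lemma mem_of_deleteEdges {H : SimpleGraph V} {s : Set (Sym2 V)} {e : Sym2 V}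
    (h : e ∈ (H.deleteEdges s).edgeSet) : e ∈ H.edgeSet ∧ e ∉ s := by
  rwa [edgeSet_deleteEdges] at h

lemma lemmaA : ∀ (n : ℕ) (H : SimpleGraph V), H.edgeFinset.card ≤ n →
    (∀ v : V, (∃ z, H.Adj v z) → ∃ y, Odd (edeg H y) ∧ H.Reachable v y) →
    ∃ L : List ((a : V) × (b : V) × H.Walk a b),
      (∀ T ∈ L, T.2.2.IsTrail) ∧
      (∀ T ∈ L, T.1 ≠ T.2.1) ∧
      L.Pairwise (fun T S => ∀ e ∈ T.2.2.edges, e ∉ S.2.2.edges) ∧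
      L.Pairwise (fun T S => ({T.1, T.2.1} : Set V) ∩ {S.1, S.2.1} = ∅) ∧
      (∀ e : Sym2 V, e ∈ H.edgeSet ↔ ∃ T ∈ L, e ∈ T.2.2.edges) ∧
      (∀ T ∈ L, Odd (edeg H T.1) ∧ Odd (edeg H T.2.1)) := by
  intro n
  induction n with
  | zero =>
    intro H hcard _
    have hE : H.edgeFinset = ∅ := Finset.card_eq_zero.mp (Nat.le_zero.mp hcard)
    refine ⟨[], by simp, by simp, by simp, by simp, fun e => ?_, by simp⟩
    simp only [List.not_mem_nil, false_and, exists_false, iff_false, exists_const]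
    intro he
    have : e ∈ H.edgeFinset := by rwa [mem_edgeFinset]
    simp [hE] at this
  | succ n ih =>
    intro H hcard hP
    by_cases hE : H.edgeFinset = ∅
    · refine ⟨[], by simp, by simp, by simp, by simp, fun e => ?_, by simp⟩
      simp only [List.not_mem_nil, false_and, exists_false, iff_false, exists_const]
      intro he
      have : e ∈ H.edgeFinset := by rwa [mem_edgeFinset]
      simp [hE] at this
    · obtain ⟨e0, he0⟩ := Finset.nonempty_iff_ne_empty.mpr hE
      induction e0 using Sym2.ind with
      | _ a b =>
      rw [mem_edgeFinset, mem_edgeSet] at he0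
      obtain ⟨x, hxodd, -⟩ := hP a ⟨b, he0⟩
      obtain ⟨y, T, hT, hmax⟩ := exists_max_trail H x
      obtain ⟨hxy, hyodd⟩ := max_trail_odd_end hT hmax hxodd
      set H' : SimpleGraph V := H.deleteEdges {e | e ∈ T.edges} with hH'
      have hTsub : ∀ e ∈ T.edges, e ∈ H.edgeSet := fun e he => T.edges_subset_edgeSet he
      have hsplit : ∀ z, edeg H z = edeg H' z + T.edges.countP (fun e => z ∈ e) :=
        edeg_split H T.edges hT.edges_nodup hTsub
      -- T has at least one edge
      have hTlen : 0 < T.length := by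
        rcases Nat.eq_zero_or_pos T.length with h0 | h; swap; · exact h
        exact absurd (Walk.eq_of_length_eq_zero h0) hxy
      have hTedne : T.edges ≠ [] := by
        intro h
        have := T.length_edges
        rw [h] at this
        simp at this
        omega
      -- card bound
      obtain ⟨e1, he1⟩ := List.exists_mem_of_ne_nil _ hTedne
      have he1F : e1 ∈ H.edgeFinset := by rw [mem_edgeFinset]; exact hTsub e1 he1
      have hcard' : H'.edgeFinset.card ≤ n := by
        have hsub : H'.edgeFinset ⊆ H.edgeFinset.erase e1 := by
          intro e he
          rw [mem_edgeFinset] at he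
          obtain ⟨heH, heT⟩ := mem_of_deleteEdges he
          exact Finset.mem_erase.mpr ⟨fun h => heT (h ▸ he1), by rwa [mem_edgeFinset]⟩
        have := Finset.card_le_card hsub
        rw [Finset.card_erase_of_mem he1F] at this
        omega
      -- parity facts
      have hparity : ∀ z, z ≠ x → z ≠ y → (Odd (edeg H' z) ↔ Odd (edeg H z)) := by
        intro z hzx hzy
        have heven : Even (T.edges.countP (fun e => z ∈ e)) :=
          (hT.even_countP_edges_iff z).mpr (fun _ => ⟨hzx, hzy⟩)
        rw [hsplit z, Nat.odd_add]
        exact ⟨fun h => by tauto, fun h => by tauto⟩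
      have hcountx : ¬ Even (T.edges.countP (fun e => x ∈ e)) := by
        intro hev
        exact ((hT.even_countP_edges_iff x).mp hev hxy).1 rfl
      have hcounty : ¬ Even (T.edges.countP (fun e => y ∈ e)) := by
        intro hev
        exact ((hT.even_countP_edges_iff y).mp hev hxy).2 rfl
      have hxeven : ¬ Odd (edeg H' x) := by
        intro h
        have hodd2 : Odd (T.edges.countP (fun e => x ∈ e)) := Nat.not_even_iff_odd.mp hcountx
        have : Even (edeg H x) := by
          rw [hsplit x]
          exact Odd.add_odd h hodd2
        exact (Nat.not_even_iff_odd.mpr hxodd) this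
      have hyeven : ¬ Odd (edeg H' y) := by
        intro h
        have hodd2 : Odd (T.edges.countP (fun e => y ∈ e)) := Nat.not_even_iff_odd.mp hcounty
        have : Even (edeg H y) := by
          rw [hsplit y]
          exact Odd.add_odd h hodd2
        exact (Nat.not_even_iff_odd.mpr hyodd) this
      -- the invariant for H'
      have hP' : ∀ v : V, (∃ z, H'.Adj v z) → ∃ w, Odd (edeg H' w) ∧ H'.Reachable v w := by
        intro v hv
        by_contra hno
        push_neg at hno
        obtain ⟨z0, hz0⟩ := hv
        have hz0H : H.Adj v z0 := ((deleteEdges_adj).mp hz0).1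
        obtain ⟨t0, ht0, htr⟩ := hP v ⟨z0, hz0H⟩
        obtain ⟨wvt⟩ := htr
        obtain ⟨p, hpr, hpor⟩ := reach_prefix T wvt
        have hpT : p ∈ T.support := by
          rcases hpor with rfl | h
          · by_cases hx : p = x
            · exact hx ▸ T.start_mem_support
            · by_cases hy : p = y
              · exact hy ▸ T.end_mem_support
              · exact absurd hpr (hno p ((hparity p hx hy).mpr ht0))
          · exact h
        have hpd : ∃ z, H'.Adj p z := by
          by_cases hpv : p = v
          · subst hpv; exact ⟨z0, hz0⟩
          · obtain ⟨wq⟩ := hpr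
            cases h : wq.reverse with
            | nil => exact absurd rfl hpv
            | cons hadj q => exact ⟨_, hadj⟩
        obtain ⟨q, c, hc, hcmax⟩ := exists_max_trail H' p
        have hsatq := max_trail_saturated hc hcmax
        have hqp : p = q := by
          by_contra hqp
          have hcount : edeg H' q = c.edges.countP (fun e => q ∈ e) := edeg_eq_countP hc q hsatq
          have hoddq : Odd (edeg H' q) := by
            rw [hcount, ← Nat.not_even_iff_odd]
            intro hev
            exact ((hc.even_countP_edges_iff q).mp hev hqp).2 rfl
          exact hno q hoddq (hpr.trans c.reachable)
        subst hqp
        have hclen : 0 < c.length := by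
          rcases Nat.eq_zero_or_pos c.length with h0 | h; swap; · exact h
          exfalso
          obtain ⟨z1, hz1⟩ := hpd
          have hmem := hsatq z1 hz1
          have : c.edges = [] := List.length_eq_zero_iff.mp (by rw [c.length_edges]; exact h0)
          rw [this] at hmem
          simp at hmem
        have hdisj : ∀ e ∈ c.edges, e ∉ T.edges := by
          intro e he
          exact (mem_of_deleteEdges (c.edges_subset_edgeSet he)).2
        have hcsub : ∀ e ∈ c.edges, e ∈ H.edgeSet := fun e he =>
          (mem_of_deleteEdges (c.edges_subset_edgeSet he)).1
        have hc' : (c.transfer H hcsub).IsTrail := by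
          rw [Walk.isTrail_def, Walk.edges_transfer]; exact hc.edges_nodup
        obtain ⟨w2, hw2, hlen2⟩ := splice_trail T hT hpT (c.transfer H hcsub) hc'
          (by rw [Walk.edges_transfer]; exact hdisj)
        have hle := hmax y w2 hw2
        rw [hlen2, Walk.length_transfer] at hle
        omega
      -- apply induction hypothesis
      obtain ⟨L', h1', h2', h3', h4', h5', h6'⟩ := ih H' (by convert hcard') hP'
      let f : ((a : V) × (b : V) × H'.Walk a b) → ((a : V) × (b : V) × H.Walk a b) :=
        fun S => ⟨S.1, S.2.1, S.2.2.transfer H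
          (fun e he => (mem_of_deleteEdges (S.2.2.edges_subset_edgeSet he)).1)⟩
      have hfedges : ∀ S : ((a : V) × (b : V) × H'.Walk a b), (f S).2.2.edges = S.2.2.edges :=
        fun S => Walk.edges_transfer _ _
      refine ⟨⟨x, y, T⟩ :: L'.map f, ?_, ?_, ?_, ?_, ?_, ?_⟩
      · intro S hS
        rcases List.mem_cons.mp hS with rfl | hS
        · exact hT
        · obtain ⟨S0, hS0, rfl⟩ := List.mem_map.mp hS
          rw [Walk.isTrail_def, hfedges]
          exact (h1' S0 hS0).edges_nodup
      · intro S hS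
        rcases List.mem_cons.mp hS with rfl | hS
        · exact hxy
        · obtain ⟨S0, hS0, rfl⟩ := List.mem_map.mp hS
          exact h2' S0 hS0
      · rw [List.pairwise_cons]
        constructor
        · intro S hS e heT heS
          obtain ⟨S0, hS0, rfl⟩ := List.mem_map.mp hS
          rw [hfedges] at heS
          exact (mem_of_deleteEdges (S0.2.2.edges_subset_edgeSet heS)).2 heT
        · rw [List.pairwise_map]
          apply h3'.imp
          intro S1 S2 h12 e he1 he2
          rw [hfedges] at he1 he2
          exact h12 e he1 he2
      · rw [List.pairwise_cons]
        constructor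
        · intro S hS
          obtain ⟨S0, hS0, rfl⟩ := List.mem_map.mp hS
          ext z
          simp only [Set.mem_inter_iff, Set.mem_insert_iff, Set.mem_singleton_iff,
            Set.mem_empty_iff_false, iff_false, not_and]
          rintro (rfl | rfl) h2
          · rcases h2 with h2 | h2
            · exact (h2 ▸ hxeven) (h6' S0 hS0).1
            · exact (h2 ▸ hxeven) (h6' S0 hS0).2
          · rcases h2 with h2 | h2
            · exact (h2 ▸ hyeven) (h6' S0 hS0).1
            · exact (h2 ▸ hyeven) (h6' S0 hS0).2
        · rw [List.pairwise_map]
          exact h4'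
      · intro e
        constructor
        · intro he
          by_cases hm : e ∈ T.edges
          · exact ⟨⟨x, y, T⟩, List.mem_cons_self, hm⟩
          · have : e ∈ H'.edgeSet := by rw [hH', edgeSet_deleteEdges]; exact ⟨he, hm⟩
            obtain ⟨S0, hS0, hmem⟩ := (h5' e).mp this
            exact ⟨f S0, List.mem_cons_of_mem _ (List.mem_map_of_mem hS0),
              by rw [hfedges]; exact hmem⟩
        · rintro ⟨S, hS, he⟩
          rcases List.mem_cons.mp hS with rfl | hS
          · exact T.edges_subset_edgeSet he
          · obtain ⟨S0, hS0, rfl⟩ := List.mem_map.mp hS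
            rw [hfedges] at he
            exact (mem_of_deleteEdges (S0.2.2.edges_subset_edgeSet he)).1
      · intro S hS
        rcases List.mem_cons.mp hS with rfl | hS
        · exact ⟨hxodd, hyodd⟩
        · obtain ⟨S0, hS0, rfl⟩ := List.mem_map.mp hS
          obtain ⟨ho1, ho2⟩ := h6' S0 hS0
          constructor
          · have hne1 : S0.1 ≠ x := fun h => hxeven (h ▸ ho1)
            have hne2 : S0.1 ≠ y := fun h => hyeven (h ▸ ho1)
            exact (hparity S0.1 hne1 hne2).mp ho1
          · have hne1 : S0.2.1 ≠ x := fun h => hxeven (h ▸ ho2)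
            have hne2 : S0.2.1 ≠ y := fun h => hyeven (h ▸ ho2)
            exact (hparity S0.2.1 hne1 hne2).mp ho2

/-- The key invariant: every vertex with an edge can reach an odd-degree vertex. -/
def Pprop (H : SimpleGraph V) : Prop :=
  ∀ v : V, (∃ z, H.Adj v z) → ∃ y, Odd (edeg H y) ∧ H.Reachable v y

lemma edeg_deleteEdge_single {H : SimpleGraph V} {a b : V} (hab : H.Adj a b) (z : V) :
    edeg H z = edeg (H.deleteEdges {s(a, b)}) z + (if z ∈ s(a, b) then 1 else 0) := by
  have h := edeg_split H [s(a, b)] (List.nodup_singleton _)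
    (by intro e he; rw [List.mem_singleton] at he; subst he; exact (mem_edgeSet H).mpr hab) z
  have hs : {e : Sym2 V | e ∈ [s(a, b)]} = {s(a, b)} := by
    ext e; simp
  rw [hs] at h
  rw [h]
  congr 1
  by_cases hz : z ∈ s(a, b) <;> simp [List.countP_cons, hz]

lemma lemmaD (H H1 : SimpleGraph V) (a b : V) (hab : H.Adj a b)
    (hH1 : H1 = H.deleteEdges {s(a, b)}) (hP1 : Pprop H1)
    (hyp : ¬Odd (edeg H1 a) ∨ ¬Odd (edeg H1 b) ∨
      ∃ z, z ≠ a ∧ z ≠ b ∧ Odd (edeg H1 z) ∧ (H1.Reachable a z ∨ H1.Reachable b z)) :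
    Pprop H := by
  have hle : H1 ≤ H := hH1 ▸ deleteEdges_le _
  have hdega : edeg H a = edeg H1 a + 1 := by
    rw [hH1]
    have := edeg_deleteEdge_single hab a
    simpa using this
  have hdegb : edeg H b = edeg H1 b + 1 := by
    rw [hH1]
    have := edeg_deleteEdge_single hab b
    simpa using this
  have hdegz : ∀ z, z ≠ a → z ≠ b → edeg H z = edeg H1 z := by
    intro z hza hzb
    rw [hH1]
    have := edeg_deleteEdge_single hab z
    have hz : z ∉ s(a, b) := by simp [Sym2.mem_iff, hza, hzb]
    simpa [hz] using this
  intro v hv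
  by_cases hra : H.Reachable v a
  · rcases hyp with h1 | h2 | h3
    · refine ⟨a, ?_, hra⟩
      rw [hdega, Nat.odd_add_one]
      exact h1
    · refine ⟨b, ?_, hra.trans hab.reachable⟩
      rw [hdegb, Nat.odd_add_one]
      exact h2
    · obtain ⟨z, hza, hzb, hodd, hr⟩ := h3
      refine ⟨z, by rwa [hdegz z hza hzb], ?_⟩
      rcases hr with hr | hr
      · exact hra.trans (hr.mono hle)
      · exact hra.trans (hab.reachable.trans (hr.mono hle))
  · have hrb : ¬H.Reachable v b := fun h => hra (h.trans hab.symm.reachable)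
    obtain ⟨z0, hz0⟩ := hv
    have hz0' : H1.Adj v z0 := by
      rw [hH1, deleteEdges_adj]
      refine ⟨hz0, ?_⟩
      intro he
      rw [Set.mem_singleton_iff, Sym2.eq_iff] at he
      rcases he with ⟨rfl, rfl⟩ | ⟨rfl, rfl⟩
      · exact hra (Reachable.refl _)
      · exact hrb (Reachable.refl _)
    obtain ⟨y, hyo, hyr⟩ := hP1 v ⟨z0, hz0'⟩
    have hyH : H.Reachable v y := hyr.mono hle
    have hya : y ≠ a := fun h => hra (h ▸ hyH)
    have hyb : y ≠ b := fun h => hrb (h ▸ hyH)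
    exact ⟨y, by rwa [hdegz y hya hyb], hyH⟩

lemma lemmaC : ∀ (n : ℕ) (G : SimpleGraph V) (U : Set V),
    G.edgeFinset.card ≤ n →
    (∀ u ∈ U, ∃ v, G.Adj u v) →
    (∀ a b : V, G.Adj a b → (a ∈ U ↔ b ∉ U)) →
    ∃ σ : V → Sym2 V, (∀ u ∈ U, σ u ∈ G.edgeSet ∧ u ∈ σ u) ∧
      Pprop (G.deleteEdges (σ '' U)) := by
  intro n
  induction n with
  | zero =>
    intro G U hcard h1 _
    have hno : ∀ a b : V, ¬ G.Adj a b := by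
      intro a b hadj
      have hm : s(a, b) ∈ G.edgeFinset := by rw [mem_edgeFinset, mem_edgeSet]; exact hadj
      have hc := Finset.card_le_card (Finset.singleton_subset_iff.mpr hm)
      rw [Finset.card_singleton] at hc
      omega
    refine ⟨fun v => s(v, v), ?_, ?_⟩
    · intro u hu
      obtain ⟨v, hv⟩ := h1 u hu
      exact absurd hv (hno u v)
    · intro v hv
      obtain ⟨z, hz⟩ := hv
      exact absurd ((deleteEdges_adj.mp hz).1) (hno v z)
  | succ n ih =>
    intro G U hcard h1 h2
    rcases Set.eq_empty_or_nonempty U with hU | ⟨u0, hu0⟩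
    · subst hU
      have hno : ∀ a b : V, ¬ G.Adj a b := by
        intro a b hadj
        have := h2 a b hadj
        simp at this
      refine ⟨fun v => s(v, v), by simp, ?_⟩
      intro v hv
      obtain ⟨z, hz⟩ := hv
      exact absurd ((deleteEdges_adj.mp hz).1) (hno v z)
    · obtain ⟨w1, hw1⟩ := h1 u0 hu0
      have hw1U : w1 ∉ U := (h2 u0 w1 hw1).mp hu0
      have hu0w1 : u0 ≠ w1 := fun h => hw1U (h ▸ hu0)
      have hcard1 : (G.deleteEdges {s(u0, w1)}).edgeFinset.card ≤ n := by
        have he0F : s(u0, w1) ∈ G.edgeFinset := by rw [mem_edgeFinset, mem_edgeSet]; exact hw1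
        have hsub : (G.deleteEdges {s(u0, w1)}).edgeFinset ⊆ G.edgeFinset.erase s(u0, w1) := by
          intro e he
          rw [mem_edgeFinset] at he
          obtain ⟨heG, hee⟩ := mem_of_deleteEdges he
          exact Finset.mem_erase.mpr ⟨fun h => hee (by simp [h]), by rwa [mem_edgeFinset]⟩
        have := Finset.card_le_card hsub
        rw [Finset.card_erase_of_mem he0F] at this
        omega
      by_cases hone : ∀ z, G.Adj u0 z → z = w1
      · -- degree-one case
        set e0 : Sym2 V := s(u0, w1) with he0def
        set G1 := G.deleteEdges {e0} with hG1
        have hG1le : G1 ≤ G := deleteEdges_le _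
        have hu0iso : ∀ z, ¬ G1.Adj u0 z := by
          intro z hz
          rw [hG1, deleteEdges_adj] at hz
          have := hone z hz.1
          subst this
          exact hz.2 rfl
        have h1' : ∀ u ∈ U \ {u0}, ∃ v, G1.Adj u v := by
          rintro u ⟨huU, hu0'⟩
          rw [Set.mem_singleton_iff] at hu0'
          obtain ⟨v, hv⟩ := h1 u huU
          refine ⟨v, ?_⟩
          rw [hG1, deleteEdges_adj]
          refine ⟨hv, ?_⟩
          intro hmem
          rw [Set.mem_singleton_iff, he0def, Sym2.eq_iff] at hmem
          rcases hmem with ⟨ha, hb⟩ | ⟨ha, hb⟩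
          · exact hu0' ha
          · exact hw1U (ha ▸ huU)
        have h2' : ∀ a b : V, G1.Adj a b → (a ∈ U \ {u0} ↔ b ∉ U \ {u0}) := by
          intro a b hadj
          have hG : G.Adj a b := hG1le hadj
          have hau : a ≠ u0 := fun h => hu0iso b (h ▸ hadj)
          have hbu : b ≠ u0 := fun h => hu0iso a (h ▸ hadj.symm)
          have hiff := h2 a b hG
          constructor
          · rintro ⟨ha, -⟩ hb
            exact (hiff.mp ha) hb.1
          · intro hb
            refine ⟨?_, by simp [hau]⟩
            rw [hiff]
            intro hbU
            exact hb ⟨hbU, by simp [hbu]⟩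
        obtain ⟨σ1, hσ1, hP1⟩ := ih G1 (U \ {u0}) (by convert hcard1) h1' h2'
        refine ⟨Function.update σ1 u0 e0, ?_, ?_⟩
        · intro u hu
          by_cases h : u = u0
          · subst h
            rw [Function.update_self]
            exact ⟨(mem_edgeSet G).mpr hw1, Sym2.mem_mk_left _ _⟩
          · rw [Function.update_of_ne h]
            obtain ⟨hm, hin⟩ := hσ1 u ⟨hu, h⟩
            exact ⟨edgeSet_mono hG1le hm, hin⟩
        · have himg : (Function.update σ1 u0 e0) '' U = {e0} ∪ (σ1 '' (U \ {u0})) := by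
            ext e
            simp only [Set.mem_image, Set.mem_union, Set.mem_singleton_iff, Set.mem_diff]
            constructor
            · rintro ⟨u, hu, rfl⟩
              by_cases h : u = u0
              · subst h; left; rw [Function.update_self]
              · right
                refine ⟨u, ⟨hu, h⟩, by rw [Function.update_of_ne h]⟩
            · rintro (rfl | ⟨u, ⟨hu, h⟩, rfl⟩)
              · exact ⟨u0, hu0, Function.update_self _ _ _⟩
              · exact ⟨u, hu, Function.update_of_ne h _ _⟩
          rw [himg, ← deleteEdges_deleteEdges]
          exact hP1
      · -- u0 has at least two neighbors
        push_neg at hone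
        obtain ⟨w2, hw2adj, hw2ne⟩ := hone
        set e1 : Sym2 V := s(u0, w1) with he1def
        set G1 := G.deleteEdges {e1} with hG1
        have hG1le : G1 ≤ G := deleteEdges_le _
        have hne_e : ∀ (u z : V), u ∈ U → s(u, z) = e1 → u = u0 ∧ z = w1 := by
          intro u z hu he
          rw [he1def, Sym2.eq_iff] at he
          rcases he with ⟨ha, hb⟩ | ⟨ha, hb⟩
          · exact ⟨ha, hb⟩
          · exact absurd (ha ▸ hu) hw1U
        have h1' : ∀ u ∈ U, ∃ v, G1.Adj u v := by
          intro u hu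
          by_cases h : u = u0
          · subst h
            refine ⟨w2, ?_⟩
            rw [hG1, deleteEdges_adj]
            refine ⟨hw2adj, fun hm => ?_⟩
            rw [Set.mem_singleton_iff] at hm
            exact hw2ne (hne_e _ w2 hu hm).2
          · obtain ⟨v, hv⟩ := h1 u hu
            refine ⟨v, ?_⟩
            rw [hG1, deleteEdges_adj]
            refine ⟨hv, fun hm => ?_⟩
            rw [Set.mem_singleton_iff] at hm
            exact h (hne_e u v hu hm).1
        have h2' : ∀ a b : V, G1.Adj a b → (a ∈ U ↔ b ∉ U) := fun a b hadj => h2 a b (hG1le hadj)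
        obtain ⟨σ1, hσ1, hP1⟩ := ih G1 U (by convert hcard1) h1' h2'
        obtain ⟨he0G1, hu0e0⟩ := hσ1 u0 hu0
        obtain ⟨w0, he0w0⟩ := Sym2.mem_iff_exists.mp hu0e0
        have he0G : σ1 u0 ∈ G.edgeSet := edgeSet_mono hG1le he0G1
        have hadj0 : G.Adj u0 w0 := by
          rw [he0w0] at he0G
          exact (mem_edgeSet G).mp he0G
        have hw0U : w0 ∉ U := (h2 u0 w0 hadj0).mp hu0
        have he0ne : σ1 u0 ≠ e1 := by
          intro h
          have hmem : σ1 u0 ∈ G1.edgeSet := he0G1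
          rw [hG1, edgeSet_deleteEdges] at hmem
          exact hmem.2 (by rw [h]; exact rfl)
        have hw0w1 : w0 ≠ w1 := fun h => he0ne (by rw [he0w0, h])
        set H1 := G1.deleteEdges (σ1 '' U) with hH1def
        -- candidate A
        have hAeq : H1 = (G.deleteEdges (σ1 '' U)).deleteEdges {e1} := by
          rw [hH1def, hG1, deleteEdges_deleteEdges, deleteEdges_deleteEdges, Set.union_comm]
        have hAadj : (G.deleteEdges (σ1 '' U)).Adj u0 w1 := by
          rw [deleteEdges_adj]
          refine ⟨hw1, fun hm => ?_⟩
          obtain ⟨u, hu, hue⟩ := hm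
          have huin : u ∈ σ1 u := (hσ1 u hu).2
          rw [hue] at huin
          rw [Sym2.mem_iff] at huin
          rcases huin with rfl | rfl
          · exact he0ne hue
          · exact hw1U hu
        -- candidate B
        set σB := Function.update σ1 u0 e1 with hσB
        have himgB : σB '' U = {e1} ∪ (σ1 '' (U \ {u0})) := by
          ext e
          simp only [Set.mem_image, Set.mem_union, Set.mem_singleton_iff, Set.mem_diff]
          constructor
          · rintro ⟨u, hu, rfl⟩
            by_cases h : u = u0
            · subst h; left; rw [hσB, Function.update_self]
            · right
              refine ⟨u, ⟨hu, h⟩, by rw [hσB, Function.update_of_ne h]⟩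
          · rintro (rfl | ⟨u, ⟨hu, h⟩, rfl⟩)
            · exact ⟨u0, hu0, by rw [hσB, Function.update_self]⟩
            · exact ⟨u, hu, by rw [hσB, Function.update_of_ne h]⟩
        have himgA : σ1 '' U = {σ1 u0} ∪ (σ1 '' (U \ {u0})) := by
          ext e
          simp only [Set.mem_image, Set.mem_union, Set.mem_singleton_iff, Set.mem_diff]
          constructor
          · rintro ⟨u, hu, rfl⟩
            by_cases h : u = u0
            · subst h; left; rfl
            · right; exact ⟨u, ⟨hu, h⟩, rfl⟩
          · rintro (rfl | ⟨u, ⟨hu, h⟩, rfl⟩)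
            · exact ⟨u0, hu0, rfl⟩
            · exact ⟨u, hu, rfl⟩
        have hBeq : H1 = (G.deleteEdges (σB '' U)).deleteEdges {σ1 u0} := by
          rw [hH1def, hG1, deleteEdges_deleteEdges, deleteEdges_deleteEdges, himgA, himgB]
          congr 1
          ext e
          simp only [Set.mem_union, Set.mem_singleton_iff]
          tauto
        have hBadj : (G.deleteEdges (σB '' U)).Adj u0 w0 := by
          rw [deleteEdges_adj]
          refine ⟨hadj0, fun hm => ?_⟩
          obtain ⟨u, hu, hue⟩ := hm
          by_cases h : u = u0
          · subst h
            rw [hσB, Function.update_self] at hue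
            exact he0ne (by rw [he0w0, ← hue])
          · rw [hσB, Function.update_of_ne h] at hue
            have huin : u ∈ σ1 u := (hσ1 u hu).2
            rw [hue, Sym2.mem_iff] at huin
            rcases huin with rfl | rfl
            · exact h rfl
            · exact hw0U hu
        have hBadj' : (G.deleteEdges (σB '' U)).Adj u0 w0 := hBadj
        have hB0eq : s(u0, w0) = σ1 u0 := he0w0.symm
        -- σB satisfies the basic conditions
        have hσBcond : ∀ u ∈ U, σB u ∈ G.edgeSet ∧ u ∈ σB u := by
          intro u hu
          by_cases h : u = u0
          · subst h
            rw [hσB, Function.update_self]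
            exact ⟨(mem_edgeSet G).mpr hw1, Sym2.mem_mk_left _ _⟩
          · rw [hσB, Function.update_of_ne h]
            obtain ⟨hm, hin⟩ := hσ1 u hu
            exact ⟨edgeSet_mono hG1le hm, hin⟩
        have hσ1cond : ∀ u ∈ U, σ1 u ∈ G.edgeSet ∧ u ∈ σ1 u := by
          intro u hu
          obtain ⟨hm, hin⟩ := hσ1 u hu
          exact ⟨edgeSet_mono hG1le hm, hin⟩
        by_cases hcase : ¬Odd (edeg H1 u0) ∨ ¬Odd (edeg H1 w1) ∨
            ∃ z, z ≠ u0 ∧ z ≠ w1 ∧ Odd (edeg H1 z) ∧ (H1.Reachable u0 z ∨ H1.Reachable w1 z)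
        · exact ⟨σ1, hσ1cond, lemmaD _ H1 u0 w1 hAadj hAeq hP1 hcase⟩
        · push_neg at hcase
          obtain ⟨hodd_u0, hodd_w1, hforall⟩ := hcase
          by_cases hw0odd : Odd (edeg H1 w0)
          · obtain ⟨z, hz_ne, hz_odd, hz_reach⟩ := exists_other_odd H1 u0 hodd_u0
            have hz_w1 : z = w1 := by
              by_contra hzw1
              exact (hforall z hz_ne hzw1 hz_odd).1 hz_reach
            subst hz_w1
            refine ⟨σB, hσBcond, lemmaD _ H1 u0 w0 hBadj (by rw [he0w0] at hBeq; exact hBeq)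
              hP1 (Or.inr (Or.inr ⟨z, ?_, ?_, hz_odd, Or.inl hz_reach⟩))⟩
            · exact hz_ne
            · exact fun h => hw0w1 (by rw [← h])
          · exact ⟨σB, hσBcond, lemmaD _ H1 u0 w0 hBadj (by rw [he0w0] at hBeq; exact hBeq)
              hP1 (Or.inr (Or.inl hw0odd))⟩


end helpers

/-- Helpful Lemma: if `G` is a finite bipartite graph with parts `U` and `W`, every
vertex of `U` having degree at least 1, then there is a choice `σ` of one incident
edge per vertex of `U` and a collection of pairwise edge-disjoint open trails, with at
most one trail ending at each vertex, such that the trail edges together with `σ(U)`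
partition `E(G)`. -/
theorem stmt_4 {V : Type*} [Fintype V] [DecidableEq V] (G : SimpleGraph V)
    (U W : Set V) (hUW : Disjoint U W) (hcover : U ∪ W = Set.univ)
    (hbip : ∀ u v : V, G.Adj u v → (u ∈ U ∧ v ∈ W) ∨ (u ∈ W ∧ v ∈ U))
    (hdeg : ∀ u ∈ U, ∃ v, G.Adj u v) :
    ∃ (σ : V → Sym2 V) (L : List ((a : V) × (b : V) × G.Walk a b)),
      (∀ u ∈ U, σ u ∈ G.edgeSet ∧ u ∈ σ u) ∧
      (∀ T ∈ L, T.2.2.IsTrail) ∧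
      (∀ T ∈ L, T.1 ≠ T.2.1) ∧
      L.Pairwise (fun T S => ∀ e ∈ T.2.2.edges, e ∉ S.2.2.edges) ∧
      L.Pairwise (fun T S => ({T.1, T.2.1} : Set V) ∩ {S.1, S.2.1} = ∅) ∧
      (∀ T ∈ L, ∀ e ∈ T.2.2.edges, ∀ u ∈ U, e ≠ σ u) ∧
      (∀ e : Sym2 V, e ∈ G.edgeSet ↔
        ((∃ T ∈ L, e ∈ T.2.2.edges) ∨ (∃ u ∈ U, e = σ u))) := by
  classical
  have h2 : ∀ a b : V, G.Adj a b → (a ∈ U ↔ b ∉ U) := by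
    intro a b hadj
    rcases hbip a b hadj with ⟨ha, hb⟩ | ⟨ha, hb⟩
    · exact iff_of_true ha (fun hbU => (Set.disjoint_left.mp hUW) hbU hb)
    · exact iff_of_false (fun haU => (Set.disjoint_left.mp hUW) haU ha) (fun h => h hb)
  obtain ⟨σ, hσ, hPH⟩ := lemmaC G.edgeFinset.card G U le_rfl hdeg h2
  set H := G.deleteEdges (σ '' U) with hH
  obtain ⟨L', h1', h2', h3', h4', h5', h6'⟩ := lemmaA H.edgeFinset.card H
    (by convert (Nat.le_refl H.edgeFinset.card)) hPH
  let f : ((a : V) × (b : V) × H.Walk a b) → ((a : V) × (b : V) × G.Walk a b) :=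
    fun S => ⟨S.1, S.2.1, S.2.2.transfer G
      (fun e he => (mem_of_deleteEdges (S.2.2.edges_subset_edgeSet he)).1)⟩
  have hfedges : ∀ S : ((a : V) × (b : V) × H.Walk a b), (f S).2.2.edges = S.2.2.edges :=
    fun S => Walk.edges_transfer _ _
  refine ⟨σ, L'.map f, hσ, ?_, ?_, ?_, ?_, ?_, ?_⟩
  · intro T hT
    obtain ⟨S, hS, rfl⟩ := List.mem_map.mp hT
    rw [Walk.isTrail_def, hfedges]
    exact (h1' S hS).edges_nodup
  · intro T hT
    obtain ⟨S, hS, rfl⟩ := List.mem_map.mp hT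
    exact h2' S hS
  · rw [List.pairwise_map]
    apply h3'.imp
    intro a b h e he1 he2
    rw [hfedges] at he1 he2
    exact h e he1 he2
  · rw [List.pairwise_map]
    exact h4'
  · intro T hT e he u hu heq
    obtain ⟨S, hS, rfl⟩ := List.mem_map.mp hT
    rw [hfedges] at he
    exact (mem_of_deleteEdges (S.2.2.edges_subset_edgeSet he)).2 ⟨u, hu, heq.symm⟩
  · intro e
    constructor
    · intro he
      by_cases hm : ∃ u ∈ U, e = σ u
      · exact Or.inr hm
      · have hmem : e ∈ H.edgeSet := by
          rw [hH, edgeSet_deleteEdges]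
          exact ⟨he, fun hmem => hm (by obtain ⟨u, hu, hue⟩ := hmem; exact ⟨u, hu, hue.symm⟩)⟩
        obtain ⟨S, hS, hmemS⟩ := (h5' e).mp hmem
        exact Or.inl ⟨f S, List.mem_map_of_mem hS, by rw [hfedges]; exact hmemS⟩
    · rintro (⟨T, hT, he⟩ | ⟨u, hu, rfl⟩)
      · obtain ⟨S, hS, rfl⟩ := List.mem_map.mp hT
        rw [hfedges] at he
        exact (mem_of_deleteEdges (S.2.2.edges_subset_edgeSet he)).1
      · exact (hσ u hu).1
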